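/- Let p and q be distinct primes, α and β positive integers, and n = p^α q^β. Let r denote the number of units u of ℤ_n with u² = 1, and write φ = φ(n) for Euler's totient of n. Then the Sombor index of Cl₂(ℤ_n) equals (3/2)·√2·(φ − r) + 2r·√(4 + (1 + φ)²) + 2(φ − r)·√(9 + (2 + φ)²) + √2·(φ − r)·(2 + φ)·(φ − r + 1) + r²·√2·(1 + φ) + 2r(φ − r)·√(2φ² + 6φ + 5). -/

import Mathlib

/-- The clean graph `Cl₂(R)`: vertices are pairs `(e, u)` where `e` is a nonzero
idempotent of `R` and `u` is a unit of `R`; two distinct vertices `(e, u)` and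
`(f, v)` are adjacent iff `e * f = 0` or `u * v = 1`. -/
def Cl2 (R : Type*) [CommRing R] :
    SimpleGraph ({e : R // IsIdempotentElem e ∧ e ≠ 0} × Rˣ) where
  Adj v w := v ≠ w ∧ (((v.1 : R) * (w.1 : R) = 0) ∨ ((v.2 : R) * (w.2 : R) = 1))
  symm := by
    refine ⟨?_⟩
    rintro v w ⟨hne, h⟩
    refine ⟨hne.symm, ?_⟩
    rcases h with h | h
    · left; rwa [mul_comm]
    · right; rwa [mul_comm]
  loopless := by refine ⟨?_⟩; rintro v ⟨h, -⟩; exact h rfl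

/-- The Sombor index of a graph: the sum over edges `uv` of
`√(deg(u)² + deg(v)²)`. -/
noncomputable def somborIndex {V : Type*} (G : SimpleGraph V) : ℝ :=
  ∑ᶠ e ∈ G.edgeSet,
    Sym2.lift
      ⟨fun u v =>
        Real.sqrt (((G.neighborSet u).ncard : ℝ) ^ 2 + ((G.neighborSet v).ncard : ℝ) ^ 2),
        fun u v => by simp [add_comm]⟩ e

/-!
By the Chinese remainder theorem `ℤ_n ≅ ℤ_{p^α} × ℤ_{q^β}` is a product of two local rings, so
its nonzero idempotents are exactly `1`, `e` and `1 - e` for a single nontrivial idempotent `e`, and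
`e (1 - e) = 0` is the only vanishing product among them. Hence `(x, u)` is adjacent to every
`(y, v)` with `x y = 0` and to the `(y, u⁻¹)` other than itself, which gives
`deg (1, u) = 3 - [u² = 1]` and `deg (e, u) = deg (1 - e, u) = φ + 2 - [u² = 1]`.
Counting every edge from both ends, `2 SO = ∑_u c(u)`, where the contribution `c(u)` of the three
vertices `(x, u)` only depends on whether `u² = 1`.
-/

open Finset

namespace SimpleGraph

variable {V : Type*} [Fintype V] (G : SimpleGraph V) [DecidableRel G.Adj]

theorem two_nsmul_sum_edgeFinset {M : Type*} [AddCommMonoid M] (f : Sym2 V → M) :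
    2 • ∑ e ∈ G.edgeFinset, f e = ∑ v, ∑ w, if G.Adj v w then f s(v, w) else 0 := by
  classical
  have hdarts : ∑ d : G.Dart, f d.edge = 2 • ∑ e ∈ G.edgeFinset, f e := by
    rw [← sum_fiberwise_of_maps_to (g := Dart.edge) (t := G.edgeFinset)
      (fun d _ => (mem_edgeFinset).2 d.edge_mem), smul_sum]
    refine sum_congr rfl fun e he => ?_
    rw [sum_congr rfl fun d hd => congrArg f (mem_filter.1 hd).2, sum_const,
      G.dart_edge_fiber_card e (mem_edgeFinset.1 he)]
  rw [← hdarts, ← Fintype.sum_prod_type', ← sum_filter]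
  exact sum_bij' (fun d _ => d.toProd) (fun p hp => ⟨p, (mem_filter.1 hp).2⟩)
    (fun d _ => by simp [d.adj]) (fun _ _ => mem_univ _)
    (fun _ _ => rfl) (fun _ _ => rfl) (fun _ _ => rfl)

theorem two_mul_somborIndex :
    2 * somborIndex G = ∑ v, ∑ w,
      if G.Adj v w then √((G.degree v : ℝ) ^ 2 + (G.degree w : ℝ) ^ 2) else 0 := by
  have hdeg (v : V) : (G.neighborSet v).ncard = G.degree v := by
    rw [Set.ncard_eq_toFinset_card', ← card_neighborSet_eq_degree, Set.toFinset_card]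
  rw [somborIndex, ← coe_edgeFinset, finsum_mem_coe_finset, two_mul, ← two_nsmul,
    two_nsmul_sum_edgeFinset]
  simp only [Sym2.lift_mk, hdeg]

end SimpleGraph

theorem Fintype.sum_eq_card_mul_add_card_mul {ι : Type*} [Fintype ι] (p : ι → Prop)
    [DecidablePred p] {f : ι → ℝ} {a b : ℝ} (ha : ∀ i, p i → f i = a)
    (hb : ∀ i, ¬p i → f i = b) :
    ∑ i, f i = #{i | p i} * a + #{i | ¬p i} * b := by
  rw [← sum_filter_add_sum_filter_not univ p, ← nsmul_eq_mul, ← nsmul_eq_mul, ← sum_const,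
    ← sum_const]
  exact congrArg₂ (· + ·) (Finset.sum_congr rfl fun i hi => ha i (mem_filter.1 hi).2)
    (Finset.sum_congr rfl fun i hi => hb i (mem_filter.1 hi).2)

theorem Real.sqrt_sq_add_sq_self {a : ℝ} (ha : 0 ≤ a) : √(a ^ 2 + a ^ 2) = a * √2 := by
  rw [← two_mul, Real.sqrt_mul zero_le_two, Real.sqrt_sq ha, mul_comm]

theorem IsLocalRing.eq_zero_or_eq_one_of_isIdempotentElem {A : Type*} [CommRing A]
    [IsLocalRing A] {a : A} (ha : IsIdempotentElem a) : a = 0 ∨ a = 1 := by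
  rcases IsLocalRing.isUnit_or_isUnit_one_sub_self a with hu | hu
  · exact Or.inr ((IsIdempotentElem.iff_eq_one_of_isUnit hu).1 ha)
  · left
    simpa using (IsIdempotentElem.iff_eq_one_of_isUnit hu).1 ha.one_sub

theorem ZMod.isLocalRing_prime_pow {p : ℕ} [Fact p.Prime] {k : ℕ} (hk : k ≠ 0) :
    IsLocalRing (ZMod (p ^ k)) :=
  have : Fact (1 < p ^ k) := ⟨Nat.one_lt_pow hk (Fact.out : p.Prime).one_lt⟩
  .of_surjective' (PadicInt.toZModPow k) (ZMod.ringHom_surjective _)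

/-- `R ≅ Re × R(1 - e)`, and neither factor has a nontrivial idempotent. -/
structure FourIdempotents {R : Type*} [CommRing R] (e : R) : Prop where
  isIdempotentElem : IsIdempotentElem e
  ne_zero : e ≠ 0
  ne_one : e ≠ 1
  eq_or_eq : ∀ x : R, IsIdempotentElem x → x = 0 ∨ x = 1 ∨ x = e ∨ x = 1 - e

theorem RingEquiv.fourIdempotents_symm_one_zero {R A B : Type*} [CommRing R] [CommRing A]
    [CommRing B] [IsLocalRing A] [IsLocalRing B] (ψ : R ≃+* A × B) :
    FourIdempotents (ψ.symm (1, 0)) where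
  isIdempotentElem := by simp [IsIdempotentElem, ← map_mul]
  ne_zero h := by simpa using congrArg ψ h
  ne_one h := by simpa using congrArg ψ h
  eq_or_eq x hx := by
    have hψx : IsIdempotentElem (ψ x) := hx.map ψ
    have h1 : (ψ x).1 = 0 ∨ (ψ x).1 = 1 :=
      IsLocalRing.eq_zero_or_eq_one_of_isIdempotentElem (hψx.map (RingHom.fst A B))
    have h2 : (ψ x).2 = 0 ∨ (ψ x).2 = 1 :=
      IsLocalRing.eq_zero_or_eq_one_of_isIdempotentElem (hψx.map (RingHom.snd A B))
    simp only [← ψ.injective.eq_iff, map_zero, map_one, map_sub, RingEquiv.apply_symm_apply,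
      Prod.ext_iff]
    rcases h1 with h1 | h1 <;> rcases h2 with h2 | h2 <;> simp [h1, h2]

theorem ZMod.exists_fourIdempotents {p q : ℕ} [Fact p.Prime] [Fact q.Prime] (hpq : p ≠ q)
    {α β : ℕ} (hα : α ≠ 0) (hβ : β ≠ 0) :
    ∃ e : ZMod (p ^ α * q ^ β), FourIdempotents e :=
  have := ZMod.isLocalRing_prime_pow (p := p) hα
  have := ZMod.isLocalRing_prime_pow (p := q) hβ
  have hcop : (p ^ α).Coprime (q ^ β) :=
    .pow _ _ ((Nat.coprime_primes Fact.out Fact.out).2 hpq)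
  ⟨_, (ZMod.chineseRemainder hcop).fourIdempotents_symm_one_zero⟩

instance {M : Type*} [Mul M] [DecidableEq M] : DecidablePred (IsIdempotentElem : M → Prop) :=
  fun _ => decidable_of_iff' _ isIdempotentElem_iff

abbrev NonzeroIdempotent (R : Type*) [CommRing R] := {e : R // IsIdempotentElem e ∧ e ≠ 0}

namespace Cl2

variable {R : Type*} [CommRing R]

theorem adj_mk_mk {x y : NonzeroIdempotent R} {u v : Rˣ} :
    (Cl2 R).Adj (x, u) (y, v) ↔ (x : R) * y = 0 ∨ v = u⁻¹ ∧ (x ≠ y ∨ u ^ 2 ≠ 1) := by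
  have hxx : (x : R) * x ≠ 0 := by rw [x.2.1.eq]; exact x.2.2
  have huv : (u : R) * v = 1 ↔ v = u⁻¹ := by
    rw [← Units.val_mul, Units.val_eq_one, eq_inv_iff_mul_eq_one, mul_comm]
  have hsq : u⁻¹ = u ↔ u ^ 2 = 1 := by rw [sq, mul_eq_one_iff_inv_eq]
  simp only [Cl2, ne_eq, Prod.mk.injEq, huv]
  by_cases h0 : (x : R) * y = 0
  · have hne : x ≠ y := by rintro rfl; exact hxx h0
    simp [h0, hne]
  · simp only [h0, false_or]
    constructor
    · rintro ⟨hne, rfl⟩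
      rw [@eq_comm _ u, hsq, not_and_or] at hne
      exact ⟨rfl, hne⟩
    · rintro ⟨rfl, h⟩
      rw [@eq_comm _ u, hsq, not_and_or]
      exact ⟨h, rfl⟩

instance [DecidableEq R] : DecidableRel (Cl2 R).Adj :=
  fun _ _ => inferInstanceAs (Decidable (_ ∧ _))

theorem sum_ite_adj [Fintype R] [DecidableEq R] {M : Type*} [AddCommMonoid M]
    (g : NonzeroIdempotent R × Rˣ → M) (x : NonzeroIdempotent R) (u : Rˣ) :
    ∑ w, (if (Cl2 R).Adj (x, u) w then g w else 0) =
      ∑ y : NonzeroIdempotent R, if (x : R) * y = 0 then ∑ v, g (y, v)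
        else if x ≠ y ∨ u ^ 2 ≠ 1 then g (y, u⁻¹) else 0 := by
  rw [Fintype.sum_prod_type]
  refine sum_congr rfl fun y _ => ?_
  simp only [adj_mk_mk]
  by_cases hxy : (x : R) * y = 0
  · simp only [hxy, true_or, if_true]
  · simp only [hxy, false_or, if_false, ite_and, sum_ite_eq', mem_univ, if_true]

end Cl2

namespace FourIdempotents

variable {R : Type*} [CommRing R] {e : R} (he : FourIdempotents e)

theorem one_ne_zero (he : FourIdempotents e) : (1 : R) ≠ 0 :=
  fun h => he.ne_zero (by rw [← mul_one e, h, mul_zero])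

def one : NonzeroIdempotent R := ⟨1, .one, he.one_ne_zero⟩

def elem : NonzeroIdempotent R := ⟨e, he.isIdempotentElem, he.ne_zero⟩

def compl : NonzeroIdempotent R :=
  ⟨1 - e, he.isIdempotentElem.one_sub, sub_ne_zero.2 he.ne_one.symm⟩

@[simp] theorem coe_one : (he.one : R) = 1 := rfl

@[simp] theorem coe_elem : (he.elem : R) = e := rfl

@[simp] theorem coe_compl : (he.compl : R) = 1 - e := rfl

theorem one_ne_elem : he.one ≠ he.elem := fun h => he.ne_one (congrArg Subtype.val h).symm

theorem one_ne_compl : he.one ≠ he.compl :=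
  fun h => he.ne_zero (sub_eq_self.1 (congrArg Subtype.val h).symm)

theorem elem_ne_compl : he.elem ≠ he.compl := fun h => he.ne_zero <| by
  have h' : e = 1 - e := congrArg Subtype.val h
  rw [← he.isIdempotentElem.mul_one_sub_self, ← h', he.isIdempotentElem.eq]

variable [Fintype R] [DecidableEq R]

theorem univ_eq : (univ : Finset (NonzeroIdempotent R)) = {he.one, he.elem, he.compl} := by
  ext x
  simp only [mem_univ, mem_insert, mem_singleton, true_iff, Subtype.ext_iff, coe_one, coe_elem,
    coe_compl]
  rcases he.eq_or_eq x x.2.1 with h | h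
  · exact absurd h x.2.2
  · exact h

section NeighbourSums

variable {M : Type*} [AddCommMonoid M] (g : NonzeroIdempotent R × Rˣ → M) (u : Rˣ)

theorem sum_ite_adj_one :
    ∑ w, (if (Cl2 R).Adj (he.one, u) w then g w else 0) =
      (if u ^ 2 = 1 then 0 else g (he.one, u⁻¹)) + g (he.elem, u⁻¹) + g (he.compl, u⁻¹) :=
    by
  rw [Cl2.sum_ite_adj, he.univ_eq, sum_insert (by simp [he.one_ne_elem, he.one_ne_compl]),
    sum_pair he.elem_ne_compl]
  simp [he.one_ne_zero, he.ne_zero, sub_eq_zero, he.ne_one.symm, he.one_ne_elem,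
    he.one_ne_compl, add_assoc]

theorem sum_ite_adj_elem :
    ∑ w, (if (Cl2 R).Adj (he.elem, u) w then g w else 0) =
      g (he.one, u⁻¹) + (if u ^ 2 = 1 then 0 else g (he.elem, u⁻¹)) + ∑ v, g (he.compl, v) := by
  rw [Cl2.sum_ite_adj, he.univ_eq, sum_insert (by simp [he.one_ne_elem, he.one_ne_compl]),
    sum_pair he.elem_ne_compl]
  simp [he.ne_zero, he.isIdempotentElem.eq, he.isIdempotentElem.mul_one_sub_self,
    he.one_ne_elem.symm, add_assoc]

theorem sum_ite_adj_compl :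
    ∑ w, (if (Cl2 R).Adj (he.compl, u) w then g w else 0) =
      g (he.one, u⁻¹) + ∑ v, g (he.elem, v) + (if u ^ 2 = 1 then 0 else g (he.compl, u⁻¹)) := by
  rw [Cl2.sum_ite_adj, he.univ_eq, sum_insert (by simp [he.one_ne_elem, he.one_ne_compl]),
    sum_pair he.elem_ne_compl]
  simp [he.ne_one.symm, sub_eq_zero, he.isIdempotentElem.one_sub.eq,
    he.isIdempotentElem.one_sub_mul_self, he.one_ne_compl.symm, add_assoc]

end NeighbourSums

variable (u : Rˣ)

theorem degree_one : (Cl2 R).degree (he.one, u) = if u ^ 2 = 1 then 2 else 3 := by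
  have h := (Cl2 R).degree_eq_sum_if_adj (R := ℕ) (he.one, u)
  rw [Nat.cast_id, sum_ite_adj_one] at h
  rw [h]
  split_ifs <;> rfl

theorem degree_elem :
    (Cl2 R).degree (he.elem, u) = if u ^ 2 = 1 then Nat.card Rˣ + 1 else Nat.card Rˣ + 2 := by
  have h := (Cl2 R).degree_eq_sum_if_adj (R := ℕ) (he.elem, u)
  rw [Nat.cast_id, sum_ite_adj_elem, sum_const, card_univ, smul_eq_mul, mul_one,
    ← Nat.card_eq_fintype_card] at h
  rw [h]
  split_ifs <;> ring

theorem degree_compl :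
    (Cl2 R).degree (he.compl, u) = if u ^ 2 = 1 then Nat.card Rˣ + 1 else Nat.card Rˣ + 2 := by
  have h := (Cl2 R).degree_eq_sum_if_adj (R := ℕ) (he.compl, u)
  rw [Nat.cast_id, sum_ite_adj_compl, sum_const, card_univ, smul_eq_mul, mul_one,
    ← Nat.card_eq_fintype_card] at h
  rw [h]
  split_ifs <;> ring

theorem somborIndex_cl2 (he : FourIdempotents e) {φ r : ℕ} (hφ : Nat.card Rˣ = φ)
    (hr : Nat.card {u : Rˣ // u ^ 2 = 1} = r) :
    somborIndex (Cl2 R) =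
      3 / 2 * √2 * ((φ : ℝ) - r)
      + 2 * r * √(4 + (1 + (φ : ℝ)) ^ 2)
      + 2 * ((φ : ℝ) - r) * √(9 + (2 + (φ : ℝ)) ^ 2)
      + √2 * ((φ : ℝ) - r) * (2 + (φ : ℝ)) * ((φ : ℝ) - r + 1)
      + (r : ℝ) ^ 2 * √2 * (1 + (φ : ℝ))
      + 2 * r * ((φ : ℝ) - r) * √(2 * (φ : ℝ) ^ 2 + 6 * (φ : ℝ) + 5) := by
  have hφ' : Fintype.card Rˣ = φ := by rw [← hφ, Nat.card_eq_fintype_card]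
  have hr' : (#{u : Rˣ | u ^ 2 = 1} : ℝ) = r := by
    rw [← hr, Nat.card_eq_fintype_card, Fintype.card_subtype]
  have hs : (#{u : Rˣ | ¬u ^ 2 = 1} : ℝ) = φ - r := by
    rw [eq_sub_iff_add_eq', ← hr', ← Nat.cast_add, card_filter_add_card_filter_not, card_univ,
      hφ']
  have hsum_elem (c : ℝ) : ∑ v, √(c + ((Cl2 R).degree (he.elem, v) : ℝ) ^ 2) =
      r * √(c + (φ + 1) ^ 2) + (φ - r) * √(c + (φ + 2) ^ 2) := by
    rw [Fintype.sum_eq_card_mul_add_card_mul (fun v : Rˣ => v ^ 2 = 1) (a := √(c + (φ + 1) ^ 2))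
      (b := √(c + (φ + 2) ^ 2)) (fun v hv => by simp [he.degree_elem, hv, hφ'])
      (fun v hv => by simp [he.degree_elem, hv, hφ']), hr', hs]
  have hsum_compl (c : ℝ) : ∑ v, √(c + ((Cl2 R).degree (he.compl, v) : ℝ) ^ 2) =
      r * √(c + (φ + 1) ^ 2) + (φ - r) * √(c + (φ + 2) ^ 2) := by
    rw [Fintype.sum_eq_card_mul_add_card_mul (fun v : Rˣ => v ^ 2 = 1) (a := √(c + (φ + 1) ^ 2))
      (b := √(c + (φ + 2) ^ 2)) (fun v hv => by simp [he.degree_compl, hv, hφ'])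
      (fun v hv => by simp [he.degree_compl, hv, hφ']), hr', hs]
  -- the two brackets are the contributions `c(u)` of a unit with `u² = 1` and with `u² ≠ 1`
  have h2 : 2 * somborIndex (Cl2 R) =
      r * (4 * √(4 + (1 + (φ : ℝ)) ^ 2) + 2 * r * (1 + φ) * √2
        + 2 * (φ - r) * √(2 * (φ : ℝ) ^ 2 + 6 * (φ : ℝ) + 5))
      + (φ - r) * (3 * √2 + 4 * √(9 + (2 + (φ : ℝ)) ^ 2) + 2 * (2 + φ) * √2
        + 2 * r * √(2 * (φ : ℝ) ^ 2 + 6 * (φ : ℝ) + 5) + 2 * (φ - r) * (2 + φ) * √2) := by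
    rw [SimpleGraph.two_mul_somborIndex, Fintype.sum_prod_type, sum_comm,
      Fintype.sum_eq_card_mul_add_card_mul (fun u : Rˣ => u ^ 2 = 1), hr', hs]
    all_goals
      intro u hu
      rw [he.univ_eq, sum_insert (by simp [he.one_ne_elem, he.one_ne_compl]),
        sum_pair he.elem_ne_compl, he.sum_ite_adj_one, he.sum_ite_adj_elem, he.sum_ite_adj_compl]
      simp only [hsum_elem, hsum_compl]
      simp (disch := positivity) [hu, he.degree_one, he.degree_elem, he.degree_compl, hφ',
        Real.sqrt_sq_add_sq_self]
      ring_nf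
  linear_combination h2 / 2

end FourIdempotents

theorem sombor_two_prime_powers (p q : ℕ) (hp : p.Prime) (hq : q.Prime) (hpq : p ≠ q)
    (α β : ℕ) (hα : 0 < α) (hβ : 0 < β) (n : ℕ) (hn : n = p ^ α * q ^ β)
    (r : ℕ) (hr : r = Nat.card {u : (ZMod n)ˣ // u ^ 2 = 1}) :
    somborIndex (Cl2 (ZMod n)) =
      3 / 2 * Real.sqrt 2 * ((n.totient : ℝ) - r)
      + 2 * r * Real.sqrt (4 + (1 + (n.totient : ℝ)) ^ 2)
      + 2 * ((n.totient : ℝ) - r) * Real.sqrt (9 + (2 + (n.totient : ℝ)) ^ 2)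
      + Real.sqrt 2 * ((n.totient : ℝ) - r) * (2 + (n.totient : ℝ)) * ((n.totient : ℝ) - r + 1)
      + (r : ℝ) ^ 2 * Real.sqrt 2 * (1 + (n.totient : ℝ))
      + 2 * r * ((n.totient : ℝ) - r) *
          Real.sqrt (2 * (n.totient : ℝ) ^ 2 + 6 * (n.totient : ℝ) + 5) := by
  have := Fact.mk hp
  have := Fact.mk hq
  have : NeZero n := ⟨hn ▸ mul_ne_zero (pow_ne_zero _ hp.ne_zero) (pow_ne_zero _ hq.ne_zero)⟩
  subst hn
  obtain ⟨e, he⟩ := ZMod.exists_fourIdempotents hpq hα.ne' hβ.ne'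
  exact he.somborIndex_cl2 (by rw [Nat.card_eq_fintype_card, ZMod.card_units_eq_totient]) hr.symm
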